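/- arXiv:2004.03944 — 2 statements merged into one kernel-verified Lean document; each statement's English description precedes it below -/
import Mathlib

section
/- Define φ(m) = ⌊(5m−5)/6⌋ for 1 ≤ m ≤ 3 and φ(m) = ⌊(5m−5)/6⌋ − 1 for m ≥ 4, and define θ(r) = ⌊(5r−5)/6⌋ for 1 ≤ r ≤ 2 and θ(r) = ⌊(5r−5)/6⌋ − 1 for r ≥ 3. Then for all integers m ≥ 5 and r ≥ ⌈(m+2)/5⌉, φ(m) + ⌊(5r−m−2)/6⌋ ≥ θ(r) + 1. -/
/-!
Write `a = 5m - 5` and `b = 5r - m - 2`. Since `a + b = (5r - 5) + 4m - 2 ≥ (5r - 5) + 18` for `m ≥ 5`,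
`⌊a/6⌋ + ⌊b/6⌋ ≥ ⌊(a + b)/6⌋ - 1 ≥ ⌊(5r - 5)/6⌋ + 2`, which absorbs the `-1` in `φ m` and still leaves
the `+1`, as `θ r ≤ ⌊(5r - 5)/6⌋`.
-/

/-- φ(m) = ⌊(5m−5)/6⌋ for 1 ≤ m ≤ 3, and ⌊(5m−5)/6⌋ − 1 for m ≥ 4. -/
noncomputable def φ (m : ℤ) : ℤ :=
  if m ≤ 3 then ⌊(5 * (m : ℚ) - 5) / 6⌋ else ⌊(5 * (m : ℚ) - 5) / 6⌋ - 1

/-- θ(r) = ⌊(5r−5)/6⌋ for 1 ≤ r ≤ 2, and ⌊(5r−5)/6⌋ − 1 for r ≥ 3. -/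
noncomputable def θ (r : ℤ) : ℤ :=
  if r ≤ 2 then ⌊(5 * (r : ℚ) - 5) / 6⌋ else ⌊(5 * (r : ℚ) - 5) / 6⌋ - 1

lemma φ_of_three_lt {m : ℤ} (hm : 3 < m) : φ m = ⌊(5 * (m : ℚ) - 5) / 6⌋ - 1 :=
  if_neg hm.not_ge

lemma θ_le_floor (r : ℤ) : θ r ≤ ⌊(5 * (r : ℚ) - 5) / 6⌋ := by
  unfold θ
  split_ifs <;> omega

theorem stmt14_general (m r : ℤ) (hm : 5 ≤ m) :
    φ m + ⌊(5 * (r : ℚ) - m - 2) / 6⌋ ≥ θ r + 1 := by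
  have hm' : (5 : ℚ) ≤ m := by exact_mod_cast hm
  calc θ r + 1 ≤ ⌊(5 * (r : ℚ) - 5) / 6⌋ + 1 := by linarith [θ_le_floor r]
    _ = ⌊(5 * (r : ℚ) - 5) / 6 + 3⌋ - 2 := by rw [Int.floor_add_ofNat]; ring
    _ ≤ ⌊(5 * (m : ℚ) - 5) / 6 + (5 * (r : ℚ) - m - 2) / 6⌋ - 2 :=
      sub_le_sub_right (Int.floor_mono (by linarith)) 2
    _ ≤ ⌊(5 * (m : ℚ) - 5) / 6⌋ + ⌊(5 * (r : ℚ) - m - 2) / 6⌋ - 1 := by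
      linarith [Int.le_floor_add_floor ((5 * (m : ℚ) - 5) / 6) ((5 * (r : ℚ) - m - 2) / 6)]
    _ = φ m + ⌊(5 * (r : ℚ) - m - 2) / 6⌋ := by rw [φ_of_three_lt (by omega)]; ring

/-- For all integers m ≥ 5 and r ≥ ⌈(m+2)/5⌉, φ(m) + ⌊(5r−m−2)/6⌋ ≥ θ(r) + 1. -/
theorem stmt14 (m r : ℤ) (hm : 5 ≤ m) (hr : ⌈((m : ℚ) + 2) / 5⌉ ≤ r) :
    φ m + ⌊(5 * (r : ℚ) - m - 2) / 6⌋ ≥ θ r + 1 :=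
  stmt14_general m r hm
end

section
/- Let Z(q) = q^2 · ∏_{m≥1}(1 − q^(50m))/(1 − q^(2m)) and for α ≥ 1 define L_{2α} = ∏_{m≥1}(1 − q^(2m)) · ∑_{n≥0} c(5^(2α)·n + λ_{2α}) q^(n+1), where c and λ_{2α} are as in the paper. Then U_5(Z · L_{2α}) = ∏_{m≥1}(1 − q^(10m)) · ∑_{n≥0} c(5^(2α+1)·n + λ_{2α+1}) q^(n+1), where λ_{2α+1} = (1 + 7·5^(2α+1))/12 and U_5(∑ a(m) q^m) = ∑ a(5m) q^m. -/
open PowerSeries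

noncomputable section

/-- Infinite product ∏_{m≥1} f m of factors with f m = 1 + O(q^m), defined coefficientwise. -/
def seqProd (f : ℕ → PowerSeries ℚ) : PowerSeries ℚ :=
  PowerSeries.mk fun n => coeff n (∏ m ∈ Finset.range (n + 1), f (m + 1))

/-- Infinite sum ∑_{m≥1} f m of terms with f m = O(q^m), defined coefficientwise. -/
def seqSum (f : ℕ → PowerSeries ℚ) : PowerSeries ℚ :=
  PowerSeries.mk fun n => coeff n (∑ m ∈ Finset.range (n + 1), f (m + 1))

/-- E_2(q) = 1 − 24 ∑_{n≥1} n q^n/(1−q^n). -/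
def E2 : PowerSeries ℚ :=
  1 - 24 * seqSum fun n => (n : ℚ) • (X ^ n * (1 - X ^ n)⁻¹)

/-- The substitution q ↦ q^2: (expand2 f)(q) = f(q^2). -/
def expand2 (f : PowerSeries ℚ) : PowerSeries ℚ :=
  PowerSeries.mk fun n => if 2 ∣ n then coeff (n / 2) f else 0

/-- c(n), defined by ∑_{n≥0} c(n) q^n = (2E_2(q^2) − E_2(q)) / ∏_{m≥1}(1 − q^(2m)). -/
def c (n : ℕ) : ℚ :=
  coeff n ((2 * expand2 E2 - E2) * (seqProd fun m => 1 - X ^ (2 * m))⁻¹)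

/-- The U_5 operator: U_5(∑ a(m) q^m) = ∑ a(5m) q^m. -/
def U5 (f : PowerSeries ℚ) : PowerSeries ℚ :=
  PowerSeries.mk fun m => coeff (5 * m) f

/-- Z(q) = q^2 ∏_{m≥1}(1 − q^(50m))/(1 − q^(2m)), the eta quotient η(50τ)/η(2τ). -/
def Zq : PowerSeries ℚ :=
  X ^ 2 * (seqProd fun m => 1 - X ^ (50 * m)) * (seqProd fun m => 1 - X ^ (2 * m))⁻¹

/-! Writing Z = q^2 · P(q^5) / ∏(1 − q^(2m)) with P = ∏(1 − q^(10m)), the factor ∏(1 − q^(2m))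
of L_{2α} cancels, and U_5 commutes with multiplication by P(q^5). What remains is
U_5(q^2 ∑ c(5^(2α) n + λ_{2α}) q^(n+1)), which picks out n = 5u + 2, and
5^(2α)(5u + 2) + λ_{2α} = 5^(2α+1) u + λ_{2α+1} because 5^(2α) ≡ 1 (mod 12). -/

section Expand

open Finset.HasAntidiagonal

variable {R : Type*} [CommRing R] (p : ℕ) (hp : p ≠ 0)

theorem coeff_mul_expand_mul (g f : PowerSeries R) (m : ℕ) :
    coeff (p * m) (expand p hp g * f) = coeff m (g * mk fun k => coeff (p * k) f) := by
  rw [coeff_mul, coeff_mul]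
  have hinj : Set.InjOn (Prod.map (p * ·) (p * ·)) (antidiagonal m : Set (ℕ × ℕ)) :=
    fun x _ y _ h => Prod.ext
      (Nat.eq_of_mul_eq_mul_left (Nat.pos_of_ne_zero hp) (congrArg Prod.fst h))
      (Nat.eq_of_mul_eq_mul_left (Nat.pos_of_ne_zero hp) (congrArg Prod.snd h))
  calc ∑ x ∈ antidiagonal (p * m), coeff x.1 (expand p hp g) * coeff x.2 f
      = ∑ x ∈ (antidiagonal m).image (Prod.map (p * ·) (p * ·)),
          coeff x.1 (expand p hp g) * coeff x.2 f := by
        refine (Finset.sum_subset ?_ ?_).symm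
        · rintro _ hx
          obtain ⟨⟨a, b⟩, hab, rfl⟩ := Finset.mem_image.mp hx
          rw [mem_antidiagonal] at hab ⊢
          simp only [Prod.map, ← hab, mul_add]
        · rintro ⟨i, j⟩ hij hnot
          suffices ¬ p ∣ i by rw [coeff_expand_of_not_dvd p hp g this, zero_mul]
          rintro ⟨a, rfl⟩
          rw [mem_antidiagonal] at hij
          obtain ⟨b, rfl⟩ : p ∣ j := (Nat.dvd_add_right ⟨a, rfl⟩).mp ⟨m, hij⟩
          refine hnot (Finset.mem_image.mpr ⟨(a, b), ?_, rfl⟩)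
          rw [mem_antidiagonal]
          exact Nat.eq_of_mul_eq_mul_left (Nat.pos_of_ne_zero hp) (by rw [mul_add, hij])
    _ = ∑ x ∈ antidiagonal m, coeff x.1 g * coeff x.2 (mk fun k => coeff (p * k) f) := by
        rw [Finset.sum_image hinj]
        simp only [Prod.map, coeff_expand_mul, coeff_mk]

end Expand

theorem U5_expand_mul (g f : PowerSeries ℚ) : U5 (expand 5 (by norm_num) g * f) = g * U5 f := by
  ext m
  simp only [U5, coeff_mk]
  exact coeff_mul_expand_mul 5 (by norm_num) g f m

section SeqProd

variable {f : ℕ → PowerSeries ℚ}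

theorem coeff_prod_range_eq_coeff_seqProd (hf : ∀ m, X ^ m ∣ f m - 1) {n N : ℕ} (hN : n < N) :
    coeff n (∏ m ∈ Finset.range N, f (m + 1)) = coeff n (seqProd f) := by
  rw [seqProd, coeff_mk]
  induction N, Nat.succ_le_of_lt hN using Nat.le_induction with
  | base => rfl
  | succ N hN ih =>
    obtain ⟨h, hh⟩ := hf (N + 1)
    rw [Finset.prod_range_succ, ← ih (by omega), eq_add_of_sub_eq' hh, mul_add, mul_one,
      map_add, add_eq_left, ← mul_assoc, mul_right_comm, coeff_mul_X_pow', if_neg (by omega)]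

theorem constantCoeff_seqProd (hf : ∀ m, X ^ m ∣ f m - 1) : constantCoeff (seqProd f) = 1 := by
  have h1 := hf 1
  rw [pow_one, X_dvd_iff, map_sub, map_one, sub_eq_zero] at h1
  rw [← coeff_zero_eq_constantCoeff_apply, ← coeff_prod_range_eq_coeff_seqProd hf zero_lt_one,
    Finset.prod_range_one, zero_add, coeff_zero_eq_constantCoeff_apply, h1]

theorem seqProd_expand (hf : ∀ m, X ^ m ∣ f m - 1) (p : ℕ) (hp : p ≠ 0) :
    (seqProd fun m => expand p hp (f m)) = expand p hp (seqProd f) := by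
  ext n
  rw [seqProd, coeff_mk, ← map_prod, coeff_expand, coeff_expand]
  split_ifs
  · exact coeff_prod_range_eq_coeff_seqProd hf (Nat.lt_succ_of_le (Nat.div_le_self n p))
  · rfl

end SeqProd

theorem X_pow_dvd_one_sub_X_pow_mul_sub_one {R : Type*} [CommRing R] (a : ℕ) (ha : a ≠ 0)
    (m : ℕ) : (X : PowerSeries R) ^ m ∣ 1 - X ^ (a * m) - 1 := by
  rw [sub_sub_cancel_left, dvd_neg]
  exact pow_dvd_pow X (Nat.le_mul_of_pos_left m (Nat.pos_of_ne_zero ha))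

theorem seqProd_one_sub_X_pow_fifty :
    (seqProd fun m => 1 - X ^ (50 * m)) =
      expand 5 (by norm_num) (seqProd fun m => 1 - X ^ (10 * m)) := by
  rw [← seqProd_expand (X_pow_dvd_one_sub_X_pow_mul_sub_one 10 (by norm_num))]
  congr! 2 with m
  rw [map_sub, map_one, map_pow, expand_X, ← pow_mul]
  ring_nf

def cSeries (a b : ℕ) : PowerSeries ℚ :=
  mk fun k => if k = 0 then 0 else c (a * (k - 1) + b)

theorem U5_X_sq_mul_cSeries (a b : ℕ) :
    U5 (X ^ 2 * cSeries a b) = cSeries (5 * a) (2 * a + b) := by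
  ext t
  rw [U5, coeff_mk, mul_comm (X ^ 2), coeff_mul_X_pow']
  simp only [cSeries, coeff_mk]
  rcases t with _ | u
  · simp
  · rw [if_pos (by omega), if_neg (by omega), if_neg (by omega),
      show 5 * (u + 1) - 2 - 1 = 5 * u + 2 by omega, Nat.add_sub_cancel]
    ring_nf

theorem lambda_odd_eq (α : ℕ) :
    (1 + 7 * 5 ^ (2 * α + 1)) / 12 = 2 * 5 ^ (2 * α) + (1 + 11 * 5 ^ (2 * α)) / 12 := by
  have h : 5 ^ (2 * α) % 12 = 1 := by
    rw [pow_mul, Nat.pow_mod]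
    norm_num
  rw [pow_succ]
  omega

theorem stmt18_general (α : ℕ) :
    U5 (Zq * ((seqProd fun m => 1 - X ^ (2 * m)) *
        PowerSeries.mk fun k =>
          if k = 0 then 0 else c (5 ^ (2 * α) * (k - 1) + (1 + 11 * 5 ^ (2 * α)) / 12)))
      = (seqProd fun m => 1 - X ^ (10 * m)) *
        PowerSeries.mk fun k =>
          if k = 0 then 0 else c (5 ^ (2 * α + 1) * (k - 1) + (1 + 7 * 5 ^ (2 * α + 1)) / 12) := by
  set P := seqProd fun m => 1 - X ^ (2 * m)
  have hP : P⁻¹ * P = 1 := PowerSeries.inv_mul_cancel P <| by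
    rw [constantCoeff_seqProd (X_pow_dvd_one_sub_X_pow_mul_sub_one 2 two_ne_zero)]
    exact one_ne_zero
  change U5 (Zq * (P * cSeries (5 ^ (2 * α)) _)) = _ * cSeries (5 ^ (2 * α + 1)) _
  rw [lambda_odd_eq, pow_succ' 5 (2 * α), ← U5_X_sq_mul_cSeries, ← U5_expand_mul, Zq,
    seqProd_one_sub_X_pow_fifty]
  congr 1
  linear_combination (expand 5 (by norm_num) (seqProd fun m => 1 - X ^ (10 * m)) * X ^ 2 *
    cSeries (5 ^ (2 * α)) ((1 + 11 * 5 ^ (2 * α)) / 12)) * hP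

/-- For α ≥ 1, with L_{2α} = ∏_{m≥1}(1 − q^(2m)) · ∑_{n≥0} c(5^(2α)n + λ_{2α}) q^(n+1),
λ_{2α} = (1 + 11·5^(2α))/12, λ_{2α+1} = (1 + 7·5^(2α+1))/12:
U_5(Z · L_{2α}) = ∏_{m≥1}(1 − q^(10m)) · ∑_{n≥0} c(5^(2α+1)n + λ_{2α+1}) q^(n+1). -/
theorem stmt18 (α : ℕ) (hα : 1 ≤ α) :
    U5 (Zq * ((seqProd fun m => 1 - X ^ (2 * m)) *
        PowerSeries.mk fun k =>
          if k = 0 then 0 else c (5 ^ (2 * α) * (k - 1) + (1 + 11 * 5 ^ (2 * α)) / 12)))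
      = (seqProd fun m => 1 - X ^ (10 * m)) *
        PowerSeries.mk fun k =>
          if k = 0 then 0 else c (5 ^ (2 * α + 1) * (k - 1) + (1 + 7 * 5 ^ (2 * α + 1)) / 12) :=
  stmt18_general α

end
end
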